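/- arXiv:0812.2165 — 2 statements merged into one kernel-verified Lean document; each statement's English description precedes it below -/
import Mathlib

section
/- Let n ≥ 1 and let V : ℝⁿ → ℝⁿ be a continuously differentiable vector field such that sup_{x∈ℝⁿ} ‖V(x)‖ < ∞ and such that there exists a constant c > 0 with div V(x) ≤ −c for every x ∈ ℝⁿ. Then a contradiction follows (no such vector field exists). -/
/-!
By the divergence theorem, the integral of `div V` over the cube `[-R, R]ⁿ` equals the flux of
`V` through its boundary. Boundedness of `V` makes the flux at least `-2nM(2R)ⁿ⁻¹`, while
`div V ≤ -c` makes the integral at most `-c(2R)ⁿ`; these are incompatible once `cR > nM`.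
-/

open Matrix

/-- The divergence of a vector field `V` on `ℝⁿ`, i.e. the trace of its Jacobian
(which equals `∑ i, ∂V_i/∂x_i` for differentiable `V`). -/
noncomputable def vdiv {n : ℕ} (V : EuclideanSpace ℝ (Fin n) → EuclideanSpace ℝ (Fin n))
    (x : EuclideanSpace ℝ (Fin n)) : ℝ :=
  LinearMap.trace ℝ (EuclideanSpace ℝ (Fin n))
    (fderiv ℝ V x : EuclideanSpace ℝ (Fin n) →ₗ[ℝ] EuclideanSpace ℝ (Fin n))

/-- The minimal surface (mean curvature) operator `M(u) = div (∇u / √(1 + ‖∇u‖²))`. -/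
noncomputable def msop {n : ℕ} (u : EuclideanSpace ℝ (Fin n) → ℝ)
    (x : EuclideanSpace ℝ (Fin n)) : ℝ :=
  vdiv (fun y => (Real.sqrt (1 + ‖gradient u y‖ ^ 2))⁻¹ • gradient u y) x

/-- The Laplacian `Δu = div (∇u)`. -/
noncomputable def lap {n : ℕ} (u : EuclideanSpace ℝ (Fin n) → ℝ)
    (x : EuclideanSpace ℝ (Fin n)) : ℝ :=
  LinearMap.trace ℝ (EuclideanSpace ℝ (Fin n))
    (fderiv ℝ (gradient u) x : EuclideanSpace ℝ (Fin n) →ₗ[ℝ] EuclideanSpace ℝ (Fin n))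

/-- The Hessian bilinear form of `u` at `x`, evaluated at `(v, w)`. -/
noncomputable def hessB {n : ℕ} (u : EuclideanSpace ℝ (Fin n) → ℝ)
    (x v w : EuclideanSpace ℝ (Fin n)) : ℝ :=
  inner ℝ (fderiv ℝ (gradient u) x v) w

/-- The matrix `G(x) = Iₙ + ∇φ(x) ∇φ(x)ᵀ` of the first fundamental form of the graph of `φ`. -/
noncomputable def Gm {n : ℕ} (φ : EuclideanSpace ℝ (Fin n) → ℝ) (x : EuclideanSpace ℝ (Fin n)) :
    Matrix (Fin n) (Fin n) ℝ :=
  1 + Matrix.vecMulVec (fun i => gradient φ x i) (fun i => gradient φ x i)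

/-- The matrix `B(x) = (1 + ‖∇φ(x)‖²)^(-1/2) Hess φ(x)` of the second fundamental form of
the graph of `φ`. -/
noncomputable def Bm {n : ℕ} (φ : EuclideanSpace ℝ (Fin n) → ℝ) (x : EuclideanSpace ℝ (Fin n)) :
    Matrix (Fin n) (Fin n) ℝ :=
  Matrix.of fun i j => (Real.sqrt (1 + ‖gradient φ x‖ ^ 2))⁻¹ *
    fderiv ℝ (fderiv ℝ φ) x (EuclideanSpace.single i 1) (EuclideanSpace.single j 1)

open MeasureTheory Set

lemma vdiv_eq_sum {n : ℕ} (V : EuclideanSpace ℝ (Fin n) → EuclideanSpace ℝ (Fin n))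
    (x : EuclideanSpace ℝ (Fin n)) :
    vdiv V x = ∑ i, fderiv ℝ V x (EuclideanSpace.single i 1) i := by
  rw [vdiv, LinearMap.trace_eq_matrix_trace ℝ (EuclideanSpace.basisFun (Fin n) ℝ).toBasis,
    Matrix.trace]
  simp [LinearMap.toMatrix_apply]

lemma continuous_vdiv {n : ℕ} {V : EuclideanSpace ℝ (Fin n) → EuclideanSpace ℝ (Fin n)}
    (hV : ContDiff ℝ 1 V) : Continuous (vdiv V) := by
  have := hV.continuous_fderiv one_ne_zero
  simp only [funext (vdiv_eq_sum V)]
  fun_prop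

lemma volumeReal_Icc_const {ι : Type*} [Fintype ι] {R : ℝ} (hR : 0 ≤ R) :
    volume.real (Icc (fun _ : ι => -R) (fun _ => R)) = (2 * R) ^ Fintype.card ι := by
  rw [measureReal_def, Real.volume_Icc_pi_toReal fun _ => by linarith]
  simp [two_mul]

section

variable {n : ℕ} {f : (Fin (n + 1) → ℝ) → Fin (n + 1) → ℝ}
  {f' : (Fin (n + 1) → ℝ) → (Fin (n + 1) → ℝ) →L[ℝ] Fin (n + 1) → ℝ}

lemma neg_le_integral_divergence_of_abs_le {a b : Fin (n + 1) → ℝ} (hle : a ≤ b)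
    (hf : ∀ x, HasFDerivAt f (f' x) x)
    (hi : IntegrableOn (fun x => ∑ i, f' x (Pi.single i 1) i) (Icc a b))
    {M : ℝ} (hM : ∀ x i, |f x i| ≤ M) :
    -(2 * M * ∑ i : Fin (n + 1), volume.real (Icc (a ∘ i.succAbove) (b ∘ i.succAbove))) ≤
      ∫ x in Icc a b, ∑ i, f' x (Pi.single i 1) i := by
  have hface : ∀ i d, |∫ x in Icc (a ∘ i.succAbove) (b ∘ i.succAbove), f (i.insertNth d x) i|
      ≤ M * volume.real (Icc (a ∘ i.succAbove) (b ∘ i.succAbove)) := fun i d => by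
    simpa only [Real.norm_eq_abs] using norm_setIntegral_le_of_norm_le_const
      isCompact_Icc.measure_lt_top fun x _ => (Real.norm_eq_abs _).trans_le (hM _ i)
  have hfc : Continuous f := continuous_iff_continuousAt.2 fun x => (hf x).continuousAt
  rw [integral_divergence_of_hasFDerivAt_off_countable a b hle f f' ∅ countable_empty
    hfc.continuousOn (fun x _ => hf x) hi, Finset.mul_sum, ← Finset.sum_neg_distrib]
  refine Finset.sum_le_sum fun i _ => ?_
  have hfront := abs_le.1 (hface i (b i))
  have hback := abs_le.1 (hface i (a i))
  linarith [hfront.1, hback.2]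

theorem false_of_abs_le_of_divergence_le_neg (hf : ∀ x, HasFDerivAt f (f' x) x)
    (hdiv_cont : Continuous fun x => ∑ i, f' x (Pi.single i 1) i)
    {M : ℝ} (hM : ∀ x i, |f x i| ≤ M) {c : ℝ} (hc : 0 < c)
    (hdiv : ∀ x, ∑ i, f' x (Pi.single i 1) i ≤ -c) : False := by
  have hM0 : 0 ≤ M := (abs_nonneg _).trans (hM 0 0)
  set R := ((n + 1) * M + 1) / c with hR
  have hR0 : 0 < R := by positivity
  have hle : (fun _ => -R) ≤ fun _ : Fin (n + 1) => R := fun _ => by linarith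
  have hupper : ∫ x in Icc (fun _ => -R) (fun _ => R), ∑ i, f' x (Pi.single i 1) i
      ≤ -c * (2 * R) ^ (n + 1) :=
    calc _ ≤ ∫ _ in Icc (fun _ => -R) (fun _ : Fin (n + 1) => R), -c :=
          setIntegral_mono_on hdiv_cont.integrableOn_Icc
            (integrableOn_const isCompact_Icc.measure_lt_top.ne) measurableSet_Icc
            fun x _ => hdiv x
      _ = -c * (2 * R) ^ (n + 1) := by
          rw [setIntegral_const, volumeReal_Icc_const hR0.le, smul_eq_mul, mul_comm,
            Fintype.card_fin]
  have hlower := neg_le_integral_divergence_of_abs_le hle hf hdiv_cont.integrableOn_Icc hM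
  simp only [Function.comp_def, volumeReal_Icc_const hR0.le, Fintype.card_fin,
    Finset.sum_const, Finset.card_univ, nsmul_eq_mul, Nat.cast_succ] at hlower
  have hcR : c * R = (n + 1) * M + 1 := by rw [hR, mul_div_cancel₀ _ hc.ne']
  have hP : 0 < (2 * R) ^ n := by positivity
  have hcube : (2 * R) ^ n * (c * R) ≤ (2 * R) ^ n * ((n + 1) * M) := by
    rw [pow_succ] at hupper
    linarith [hlower.trans hupper]
  linarith [le_of_mul_le_mul_left hcube hP]

end

theorem no_bounded_vector_field_with_uniformly_negative_divergence_general
    (n : ℕ)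
    (V : EuclideanSpace ℝ (Fin n) → EuclideanSpace ℝ (Fin n)) (hV : ContDiff ℝ 1 V)
    (M : ℝ) (hbdd : ∀ x, ‖V x‖ ≤ M)
    (c : ℝ) (hc : 0 < c) (hdiv : ∀ x, vdiv V x ≤ -c) :
    False := by
  cases n with
  | zero => exact (by simpa [vdiv_eq_sum] using hdiv 0 : c ≤ 0).not_gt hc
  | succ n =>
    let e : EuclideanSpace ℝ (Fin (n + 1)) ≃L[ℝ] (Fin (n + 1) → ℝ) :=
      EuclideanSpace.equiv (Fin (n + 1)) ℝ
    have hdiv_eq : ∀ x, ∑ i, ((e : EuclideanSpace ℝ (Fin (n + 1)) →L[ℝ] (Fin (n + 1) → ℝ)).comp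
        ((fderiv ℝ V (e.symm x)).comp (e.symm : (Fin (n + 1) → ℝ) →L[ℝ] _))) (Pi.single i 1) i
        = vdiv V (e.symm x) := fun x => by
      rw [vdiv_eq_sum]; rfl
    refine false_of_abs_le_of_divergence_le_neg (f := fun x => e (V (e.symm x)))
      (fun x => e.hasFDerivAt.comp x
        (((hV.differentiable one_ne_zero) _).hasFDerivAt.comp x e.symm.hasFDerivAt))
      ?_ (fun x i => (PiLp.norm_apply_le _ i).trans (hbdd _)) hc
      (fun x => (hdiv_eq x).trans_le (hdiv _))
    simp only [hdiv_eq]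
    exact (continuous_vdiv hV).comp e.symm.continuous

/-- there is no `C¹` vector field on `ℝⁿ` (`n ≥ 1`) that is bounded and whose
divergence is bounded above by a negative constant `-c`. -/
theorem no_bounded_vector_field_with_uniformly_negative_divergence
    (n : ℕ) (hn : 1 ≤ n)
    (V : EuclideanSpace ℝ (Fin n) → EuclideanSpace ℝ (Fin n)) (hV : ContDiff ℝ 1 V)
    (M : ℝ) (hbdd : ∀ x, ‖V x‖ ≤ M)
    (c : ℝ) (hc : 0 < c) (hdiv : ∀ x, vdiv V x ≤ -c) :
    False :=
  no_bounded_vector_field_with_uniformly_negative_divergence_general n V hV M hbdd c hc hdiv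
end

section
/- Let n ≥ 1, R > 0, and let φ : ℝⁿ → ℝ be real analytic on ℝⁿ. For x ∈ ℝⁿ let κ₁(x), …, κₙ(x) be the principal curvatures of the graph of φ at (x, φ(x)). Assume: (a) κ_j(x) < 1/R for every x and j; (b) ∏_{j=1}^{n}(1 − Rκ_j(x)) = 1 for every x ∈ ℝⁿ; and (c) there exists a nonempty open set A ⊆ ℝⁿ such that either ∑_{j=1}^{n} κ_j(x) ≥ 0 for all x ∈ A, or κ_j(x) ≤ 0 for all x ∈ A and all j. Then φ is affine, i.e., the graph of φ is a hyperplane. -/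
open Matrix

/-! On `A` the numbers `1 - R κⱼ` are positive with product `1`. If `∑ κⱼ ≥ 0` their sum is at
most `n`; if all `κⱼ ≤ 0` they are all `≥ 1`. Either way `log t ≤ t - 1` forces every one of them
to be `1`, so `κ = 0` on `A`. Since `G^{-1/2} B G^{-1/2}` is symmetric, its vanishing eigenvalues
make it zero, so the Hessian of `φ` vanishes on `A`, hence everywhere by analyticity, and `φ` is
affine. -/

open Polynomial in
theorem Matrix.IsHermitian.eq_zero_of_charpoly_eq_X_pow {𝕜 ι : Type*} [RCLike 𝕜] [Fintype ι]
    [DecidableEq ι] {M : Matrix ι ι 𝕜} (hM : M.IsHermitian)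
    (h : M.charpoly = X ^ Fintype.card ι) : M = 0 := by
  have h0 : (0 : Matrix ι ι 𝕜).IsHermitian := isHermitian_zero
  rw [← hM.eigenvalues_eq_zero_iff, (hM.eigenvalues_eq_eigenvalues_iff h0).mpr
    (by rw [h, charpoly_zero]), h0.eigenvalues_eq_zero_iff]

theorem Real.eq_one_of_prod_eq_one_of_sum_le {ι : Type*} [Fintype ι] {a : ι → ℝ}
    (hpos : ∀ j, 0 < a j) (hprod : ∏ j, a j = 1) (hsum : ∑ j, a j ≤ Fintype.card ι) (j : ι) :
    a j = 1 := by
  have hlog : ∑ i, Real.log (a i) = 0 := by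
    rw [← Real.log_prod fun i _ => (hpos i).ne', hprod, Real.log_one]
  have hgap : ∀ i ∈ Finset.univ, 0 ≤ a i - 1 - Real.log (a i) :=
    fun i _ => sub_nonneg.2 (Real.log_le_sub_one_of_pos (hpos i))
  have hgap_sum : ∑ i, (a i - 1 - Real.log (a i)) = 0 := by
    refine le_antisymm ?_ (Finset.sum_nonneg hgap)
    simp only [Finset.sum_sub_distrib, hlog, Finset.sum_const, Finset.card_univ, nsmul_eq_mul,
      mul_one]
    linarith
  by_contra hne
  have := (Finset.sum_eq_zero_iff_of_nonneg hgap).mp hgap_sum j (Finset.mem_univ j)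
  linarith [Real.log_lt_sub_one_of_pos (hpos j) hne]

theorem Real.eq_one_of_prod_eq_one_of_one_le {ι : Type*} [Fintype ι] {a : ι → ℝ}
    (hone : ∀ j, 1 ≤ a j) (hprod : ∏ j, a j = 1) (j : ι) : a j = 1 := by
  have hlog : ∑ i, Real.log (a i) = 0 := by
    rw [← Real.log_prod fun i _ => (zero_lt_one.trans_le (hone i)).ne', hprod, Real.log_one]
  have := (Finset.sum_eq_zero_iff_of_nonneg fun i _ => Real.log_nonneg (hone i)).mp hlog j
    (Finset.mem_univ j)
  rw [← Real.exp_log (zero_lt_one.trans_le (hone j)), this, Real.exp_zero]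

theorem eq_zero_of_prod_one_sub_mul_eq_one {ι : Type*} [Fintype ι] {R : ℝ} (hR : 0 < R)
    {κ : ι → ℝ} (hbound : ∀ j, κ j < 1 / R) (hprod : ∏ j, (1 - R * κ j) = 1)
    (hsign : 0 ≤ ∑ j, κ j ∨ ∀ j, κ j ≤ 0) (j : ι) : κ j = 0 := by
  suffices 1 - R * κ j = 1 by simpa [hR.ne'] using this
  rcases hsign with hsum | hnonpos
  · refine Real.eq_one_of_prod_eq_one_of_sum_le (fun i => ?_) hprod ?_ j
    · have := (lt_div_iff₀ hR).mp (hbound i)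
      linarith
    · have := mul_nonneg hR.le hsum
      simp only [Finset.sum_sub_distrib, Finset.sum_const, Finset.card_univ, nsmul_eq_mul,
        mul_one, ← Finset.mul_sum]
      linarith
  · exact Real.eq_one_of_prod_eq_one_of_one_le
      (fun i => by nlinarith [hnonpos i]) hprod j

theorem isHermitian_Bm {n : ℕ} {φ : EuclideanSpace ℝ (Fin n) → ℝ} {x : EuclideanSpace ℝ (Fin n)}
    (hφ : ContDiffAt ℝ 2 φ x) : (Bm φ x).IsHermitian := by
  ext i j
  simp only [conjTranspose_apply, star_trivial, Bm, Matrix.of_apply]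
  rw [hφ.isSymmSndFDerivAt (by simp)]

theorem fderiv_fderiv_eq_zero_of_Bm_eq_zero {n : ℕ} {φ : EuclideanSpace ℝ (Fin n) → ℝ}
    {x : EuclideanSpace ℝ (Fin n)} (h : Bm φ x = 0) : fderiv ℝ (fderiv ℝ φ) x = 0 := by
  have hentry : ∀ i j, fderiv ℝ (fderiv ℝ φ) x (EuclideanSpace.single i 1)
      (EuclideanSpace.single j 1) = 0 := fun i j => by
    simpa [Bm, (by positivity : (Real.sqrt (1 + ‖gradient φ x‖ ^ 2))⁻¹ ≠ 0)] using
      congrFun (congrFun h i) j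
  let b := (EuclideanSpace.basisFun (Fin n) ℝ).toBasis
  refine ContinuousLinearMap.coe_injective <| b.ext fun i => ?_
  refine ContinuousLinearMap.coe_injective <| b.ext fun j => ?_
  simpa [b] using hentry i j

theorem fderiv_fderiv_eq_zero_of_charpoly_eq_X_pow {n : ℕ} {φ : EuclideanSpace ℝ (Fin n) → ℝ}
    {x : EuclideanSpace ℝ (Fin n)} (hφ : ContDiffAt ℝ 2 φ x) {P : Matrix (Fin n) (Fin n) ℝ}
    (hP : P.PosDef) (h : (P * Bm φ x * P).charpoly = Polynomial.X ^ n) :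
    fderiv ℝ (fderiv ℝ φ) x = 0 := by
  have hherm : (P * Bm φ x * P).IsHermitian := by
    simpa only [hP.isHermitian.eq] using isHermitian_conjTranspose_mul_mul P (isHermitian_Bm hφ)
  have hzero : P * Bm φ x * P = 0 := hherm.eq_zero_of_charpoly_eq_X_pow (by simpa using h)
  rw [hP.isUnit.mul_left_eq_zero, hP.isUnit.mul_right_eq_zero] at hzero
  exact fderiv_fderiv_eq_zero_of_Bm_eq_zero hzero

theorem exists_eq_inner_add_of_fderiv_fderiv_eq_zero {E : Type*} [NormedAddCommGroup E]
    [InnerProductSpace ℝ E] [CompleteSpace E] {φ : E → ℝ} (hφ : ContDiff ℝ 2 φ)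
    (h : ∀ x, fderiv ℝ (fderiv ℝ φ) x = 0) : ∃ (a : E) (b : ℝ), ∀ x, φ x = inner ℝ a x + b := by
  set L := fderiv ℝ φ 0
  have hconst : ∀ x, fderiv ℝ φ x = L := fun x =>
    is_const_of_fderiv_eq_zero ((hφ.fderiv_right (m := 1) le_rfl).differentiable one_ne_zero) h x 0
  obtain ⟨b, hb⟩ := isOpen_univ.exists_eq_add_of_fderiv_eq isPreconnected_univ
    (hφ.differentiable two_ne_zero).differentiableOn L.differentiable.differentiableOn
    fun x _ => by rw [hconst, L.fderiv]
  exact ⟨(InnerProductSpace.toDual ℝ E).symm L, b, fun x => by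
    rw [InnerProductSpace.toDual_symm_apply, hb (Set.mem_univ x)]⟩

theorem AnalyticOnNhd.exists_eq_inner_add_of_eqOn_fderiv_fderiv_zero {E : Type*}
    [NormedAddCommGroup E] [InnerProductSpace ℝ E] [CompleteSpace E] {φ : E → ℝ}
    (hφ : AnalyticOnNhd ℝ φ Set.univ) {A : Set E} (hA : IsOpen A) (hAne : A.Nonempty)
    (h : Set.EqOn (fderiv ℝ (fderiv ℝ φ)) 0 A) : ∃ (a : E) (b : ℝ), ∀ x, φ x = inner ℝ a x + b := by
  obtain ⟨x₀, hx₀⟩ := hAne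
  have hzero := hφ.fderiv.fderiv.eqOn_zero_of_preconnected_of_eventuallyEq_zero
    isPreconnected_univ (Set.mem_univ x₀) (Filter.eventuallyEq_of_mem (hA.mem_nhds hx₀) h)
  exact exists_eq_inner_add_of_fderiv_fderiv_eq_zero hφ.contDiff fun x => hzero (Set.mem_univ x)

theorem graph_is_hyperplane_of_monge_ampere_eq_one_general
    (n : ℕ) (R : ℝ) (hR : 0 < R)
    (φ : EuclideanSpace ℝ (Fin n) → ℝ) (hφ : AnalyticOnNhd ℝ φ Set.univ)
    (Ginv2 : EuclideanSpace ℝ (Fin n) → Matrix (Fin n) (Fin n) ℝ)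
    (hGinv2 : ∀ x, (Ginv2 x).PosDef ∧ Ginv2 x * Ginv2 x = (Gm φ x)⁻¹)
    (κ : EuclideanSpace ℝ (Fin n) → Fin n → ℝ)
    (hκ : ∀ x, (Ginv2 x * Bm φ x * Ginv2 x).charpoly =
      ∏ j, (Polynomial.X - Polynomial.C (κ x j)))
    (hbound : ∀ x, ∀ j, κ x j < 1 / R)
    (hprod : ∀ x, ∏ j, (1 - R * κ x j) = 1)
    (A : Set (EuclideanSpace ℝ (Fin n))) (hA : IsOpen A) (hAne : A.Nonempty)
    (halt : (∀ x ∈ A, 0 ≤ ∑ j, κ x j) ∨ ∀ x ∈ A, ∀ j, κ x j ≤ 0) :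
    ∃ (a : EuclideanSpace ℝ (Fin n)) (b : ℝ), ∀ x, φ x = (inner ℝ a x : ℝ) + b := by
  have hflat : ∀ x ∈ A, ∀ j, κ x j = 0 := fun x hx =>
    eq_zero_of_prod_one_sub_mul_eq_one hR (hbound x) (hprod x)
      (halt.imp (· x hx) (· x hx))
  refine hφ.exists_eq_inner_add_of_eqOn_fderiv_fderiv_zero hA hAne fun x hx => ?_
  refine fderiv_fderiv_eq_zero_of_charpoly_eq_X_pow (hφ x trivial).contDiffAt (hGinv2 x).1 ?_
  simp [hκ x, hflat x hx]

/-- the analytic core of case (iii) of the main theorem. Let `φ : ℝⁿ → ℝ` be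
real analytic, and let `κ₁(x), …, κₙ(x)` be the principal curvatures of its graph, i.e. the
eigenvalues (with multiplicity, via the characteristic polynomial) of
`G(x)^(-1/2) B(x) G(x)^(-1/2)`, where `G(x) = Iₙ + ∇φ(x)∇φ(x)ᵀ`,
`B(x) = (1+‖∇φ(x)‖²)^(-1/2) Hess φ(x)`, and `G(x)^(-1/2)` is the inverse of the positive
definite square root of `G(x)`. If `κ_j(x) < 1/R` everywhere, `∏ (1 - R κ_j(x)) = 1`
everywhere, and on some nonempty open set `A` either `∑ κ_j ≥ 0` or all `κ_j ≤ 0`, then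
`φ` is affine. -/
theorem graph_is_hyperplane_of_monge_ampere_eq_one
    (n : ℕ) (hn : 1 ≤ n) (R : ℝ) (hR : 0 < R)
    (φ : EuclideanSpace ℝ (Fin n) → ℝ) (hφ : AnalyticOnNhd ℝ φ Set.univ)
    (Ginv2 : EuclideanSpace ℝ (Fin n) → Matrix (Fin n) (Fin n) ℝ)
    (hGinv2 : ∀ x, (Ginv2 x).PosDef ∧ Ginv2 x * Ginv2 x = (Gm φ x)⁻¹)
    (κ : EuclideanSpace ℝ (Fin n) → Fin n → ℝ)
    (hκ : ∀ x, (Ginv2 x * Bm φ x * Ginv2 x).charpoly =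
      ∏ j, (Polynomial.X - Polynomial.C (κ x j)))
    (hbound : ∀ x, ∀ j, κ x j < 1 / R)
    (hprod : ∀ x, ∏ j, (1 - R * κ x j) = 1)
    (A : Set (EuclideanSpace ℝ (Fin n))) (hA : IsOpen A) (hAne : A.Nonempty)
    (halt : (∀ x ∈ A, 0 ≤ ∑ j, κ x j) ∨ ∀ x ∈ A, ∀ j, κ x j ≤ 0) :
    ∃ (a : EuclideanSpace ℝ (Fin n)) (b : ℝ), ∀ x, φ x = (inner ℝ a x : ℝ) + b :=
  graph_is_hyperplane_of_monge_ampere_eq_one_general n R hR φ hφ Ginv2 hGinv2 κ hκ hbound hprod A hA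
    hAne halt
end
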